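/- arXiv:1802.08947 — 5 statements merged into one kernel-verified Lean document; each statement's English description precedes it below -/
import Mathlib

section
/- Let G be the group with presentation ⟨ρ₀, ρ₁, ρ₂ | ρ₀², ρ₁², ρ₂², (ρ₀ρ₂)²⟩ (the free product of three groups of order 2 with the added relation that ρ₀ and ρ₂ commute). Then the commutator subgroup G' is generated by the three elements [ρ₀, ρ₁], [ρ₁, ρ₂], and [ρ₀, ρ₁]^{ρ₂}. -/
/-!
Put `A = [ρ₀, ρ₁]`, `B = [ρ₁, ρ₂]`, `C = A^{ρ₂}` and `H = ⟨A, B, C⟩`. Since the generators are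
involutions and `ρ₀ρ₂ = ρ₂ρ₀`, conjugating `A`, `B`, `C` by a generator gives
`A⁻¹, A⁻¹, C`, `ABC⁻¹, B⁻¹, B⁻¹` and `C⁻¹, BC⁻¹B⁻¹, A` respectively, so `H` is normal. The
commutators of two generators are `1`, `A^{±1}` or `B^{±1}`, so `G ⧸ H` is abelian and `G' ≤ H`.
Only the relations are used, so this holds in any group generated by three such involutions.
-/

open FreeGroup in
/-- The relators of the presentation `⟨ρ₀, ρ₁, ρ₂ | ρ₀², ρ₁², ρ₂², (ρ₀ρ₂)²⟩`. -/
def Wrels : Set (FreeGroup (Fin 3)) :=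
  {(of 0) ^ 2, (of 1) ^ 2, (of 2) ^ 2, (of 0 * of 2) ^ 2}

open Subgroup
open scoped commutatorElement

variable {G : Type*} [Group G]

theorem Subgroup.normal_closure_of_conj_mem {s t : Set G} (hs : closure s = ⊤)
    (hinv : ∀ g ∈ s, g⁻¹ ∈ s) (h : ∀ g ∈ s, ∀ x ∈ t, g * x * g⁻¹ ∈ closure t) :
    (closure t).Normal := by
  rw [← normalizer_eq_top_iff, eq_top_iff, ← hs, closure_le]
  intro g hg
  rw [SetLike.mem_coe, mem_normalizer_iff_map_conj_eq]
  refine le_antisymm ?_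
    ((closure_le _).2 fun x hx => ⟨_, h g⁻¹ (hinv g hg) x hx, by simp [mul_assoc]⟩)
  rw [MonoidHom.map_closure, closure_le]
  rintro _ ⟨x, hx, rfl⟩
  exact h g hg x hx

theorem commutator_le_of_commutatorElement_mem {s : Set G} (hs : closure s = ⊤)
    {N : Subgroup G} [N.Normal] (h : ∀ x ∈ s, ∀ y ∈ s, ⁅x, y⁆ ∈ N) : commutator G ≤ N := by
  rw [← Normal.quotient_commutative_iff_commutator_le]
  have hcomm : ∀ a ∈ QuotientGroup.mk' N '' s, ∀ b ∈ QuotientGroup.mk' N '' s, a * b = b * a := by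
    rintro _ ⟨x, hx, rfl⟩ _ ⟨y, hy, rfl⟩
    rw [← commutatorElement_eq_one_iff_mul_comm, ← map_commutatorElement,
      QuotientGroup.mk'_apply, QuotientGroup.eq_one_iff]
    exact h x hx y hy
  have htop : closure (QuotientGroup.mk' N '' s) = ⊤ := by
    rw [← MonoidHom.map_closure, hs, ← MonoidHom.range_eq_map, MonoidHom.range_eq_top]
    exact QuotientGroup.mk'_surjective N
  have := isMulCommutative_closure hcomm
  exact ⟨⟨fun a b => setLike_mul_comm (htop ▸ mem_top a) (htop ▸ mem_top b)⟩⟩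

/-- Uses the paper's convention `[x, y] = x⁻¹y⁻¹xy`, not Mathlib's `⁅x, y⁆ = xyx⁻¹y⁻¹`. -/
def derivedGenerators (a b c : G) : Set G :=
  {a⁻¹ * b⁻¹ * a * b, b⁻¹ * c⁻¹ * b * c, c⁻¹ * (a⁻¹ * b⁻¹ * a * b) * c}

section Involutions

variable {a b c : G}

theorem conj_mem_closure_derivedGenerators (ha : a * a = 1) (hb : b * b = 1) (hc : c * c = 1)
    (hac : c * a = a * c) :
    ∀ g ∈ ({a, b, c} : Set G), ∀ x ∈ derivedGenerators a b c,
      g * x * g⁻¹ ∈ closure (derivedGenerators a b c) := by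
  have ha' x : a * (a * x) = x := by rw [← mul_assoc, ha, one_mul]
  have hb' x : b * (b * x) = x := by rw [← mul_assoc, hb, one_mul]
  have hc' x : c * (c * x) = x := by rw [← mul_assoc, hc, one_mul]
  have hac' x : c * (a * x) = a * (c * x) := by rw [← mul_assoc, hac, mul_assoc]
  have ia := inv_eq_of_mul_eq_one_right ha
  have ib := inv_eq_of_mul_eq_one_right hb
  have ic := inv_eq_of_mul_eq_one_right hc
  unfold derivedGenerators
  set A := a⁻¹ * b⁻¹ * a * b with hA
  set B := b⁻¹ * c⁻¹ * b * c with hB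
  set C := c⁻¹ * A * c with hC
  have memA : A ∈ closure {A, B, C} := subset_closure (by simp)
  have memB : B ∈ closure {A, B, C} := subset_closure (by simp)
  have memC : C ∈ closure {A, B, C} := subset_closure (by simp)
  rintro _ (rfl | rfl | rfl) _ (rfl | rfl | rfl)
  · convert inv_mem memA using 1; simp [*, mul_assoc]
  · convert mul_mem (mul_mem memA memB) (inv_mem memC) using 1; simp [*, mul_assoc]
  · convert inv_mem memC using 1; simp [*, mul_assoc]
  · convert inv_mem memA using 1; simp [*, mul_assoc]
  · convert inv_mem memB using 1; simp [*, mul_assoc]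
  · convert mul_mem (mul_mem memB (inv_mem memC)) (inv_mem memB) using 1; simp [*, mul_assoc]
  · convert memC using 1; simp [*, mul_assoc]
  · convert inv_mem memB using 1; simp [*, mul_assoc]
  · convert memA using 1; simp [*, mul_assoc]

theorem commutatorElement_mem_closure_derivedGenerators (ha : a * a = 1) (hb : b * b = 1)
    (hc : c * c = 1) (hac : c * a = a * c) :
    ∀ x ∈ ({a, b, c} : Set G), ∀ y ∈ ({a, b, c} : Set G),
      ⁅x, y⁆ ∈ closure (derivedGenerators a b c) := by
  have ia := inv_eq_of_mul_eq_one_right ha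
  have ib := inv_eq_of_mul_eq_one_right hb
  have ic := inv_eq_of_mul_eq_one_right hc
  unfold derivedGenerators
  set A := a⁻¹ * b⁻¹ * a * b with hA
  set B := b⁻¹ * c⁻¹ * b * c with hB
  have memA : A ∈ closure {A, B, c⁻¹ * A * c} := subset_closure (by simp)
  have memB : B ∈ closure {A, B, c⁻¹ * A * c} := subset_closure (by simp)
  rintro _ (rfl | rfl | rfl) _ (rfl | rfl | rfl)
  · simp
  · convert memA using 1; simp [*, commutatorElement_def, mul_assoc]
  · simp [*, commutatorElement_def, mul_assoc]
  · convert inv_mem memA using 1; simp [*, commutatorElement_def, mul_assoc]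
  · simp
  · convert memB using 1; simp [*, commutatorElement_def, mul_assoc]
  · simp [*, commutatorElement_def, mul_assoc]
  · convert inv_mem memB using 1; simp [*, commutatorElement_def, mul_assoc]
  · simp

end Involutions

theorem derivedGenerators_subset_commutator (a b c : G) :
    derivedGenerators a b c ⊆ commutator G := by
  have key x y : x⁻¹ * y⁻¹ * x * y ∈ commutator G := by
    simpa [commutator_def, commutatorElement_def] using
      commutator_mem_commutator (mem_top x⁻¹) (mem_top y⁻¹)
  rintro _ (rfl | rfl | rfl)
  · exact key a b
  · exact key b c
  · simpa using Normal.conj_mem inferInstance _ (key a b) c⁻¹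

theorem commutator_eq_closure_derivedGenerators {a b c : G} (hgen : closure {a, b, c} = ⊤)
    (ha : a ^ 2 = 1) (hb : b ^ 2 = 1) (hc : c ^ 2 = 1) (hac : (a * c) ^ 2 = 1) :
    commutator G = closure (derivedGenerators a b c) := by
  rw [sq] at ha hb hc hac
  have ia := inv_eq_of_mul_eq_one_right ha
  have ib := inv_eq_of_mul_eq_one_right hb
  have ic := inv_eq_of_mul_eq_one_right hc
  have hca : c * a = a * c := by
    rw [← inv_eq_of_mul_eq_one_right hac, mul_inv_rev, ia, ic]
  have hinv : ∀ g ∈ ({a, b, c} : Set G), g⁻¹ ∈ ({a, b, c} : Set G) := by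
    rintro _ (rfl | rfl | rfl) <;> simp [ia, ib, ic]
  have hnormal := normal_closure_of_conj_mem hgen hinv (conj_mem_closure_derivedGenerators ha hb hc hca)
  exact le_antisymm
    (commutator_le_of_commutatorElement_mem hgen
      (commutatorElement_mem_closure_derivedGenerators ha hb hc hca))
    ((closure_le _).2 (derivedGenerators_subset_commutator a b c))

/-- For `G = ⟨ρ₀, ρ₁, ρ₂ | ρ₀², ρ₁², ρ₂², (ρ₀ρ₂)²⟩`, the derived subgroup `G'` is
generated by `[ρ₀, ρ₁]`, `[ρ₁, ρ₂]` and `[ρ₀, ρ₁]^{ρ₂}`, where `[a, b] = a⁻¹b⁻¹ab`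
and `x^g = g⁻¹xg`. -/
theorem derived_of_string_presentation :
    letI ρ : Fin 3 → PresentedGroup Wrels := PresentedGroup.of
    commutator (PresentedGroup Wrels) =
      Subgroup.closure
        {(ρ 0)⁻¹ * (ρ 1)⁻¹ * ρ 0 * ρ 1,
         (ρ 1)⁻¹ * (ρ 2)⁻¹ * ρ 1 * ρ 2,
         (ρ 2)⁻¹ * ((ρ 0)⁻¹ * (ρ 1)⁻¹ * ρ 0 * ρ 1) * ρ 2} := by
  have hgen : closure {PresentedGroup.of 0, PresentedGroup.of 1, PresentedGroup.of 2} =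
      (⊤ : Subgroup (PresentedGroup Wrels)) := by
    refine eq_top_iff.2 fun x _ => PresentedGroup.generated_by _ _ (fun j => ?_) x
    fin_cases j <;> exact subset_closure (by simp)
  have rel {r} (hr : r ∈ Wrels) : PresentedGroup.mk Wrels r = 1 := PresentedGroup.one_of_mem hr
  exact commutator_eq_closure_derivedGenerators hgen (rel (by simp [Wrels]))
    (rel (by simp [Wrels])) (rel (by simp [Wrels])) (rel (by simp [Wrels]))
end

section
/- In any group G generated by three involutions ρ₀, ρ₁, ρ₂ with ρ₀ρ₂ = ρ₂ρ₀, the identity [ρ₀, (ρ₁ρ₂)⁴] = [(ρ₀ρ₁)², ρ₂]^{ρ₁ρ₂} · [(ρ₀ρ₁)², ρ₂]^{(ρ₁ρ₂)³} holds. -/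
/-- In a group generated by involutions `ρ₀, ρ₁, ρ₂` with `ρ₀ρ₂ = ρ₂ρ₀`, one has
`[ρ₀, (ρ₁ρ₂)⁴] = [(ρ₀ρ₁)², ρ₂]^{ρ₁ρ₂} · [(ρ₀ρ₁)², ρ₂]^{(ρ₁ρ₂)³}`,
where `[a,b] = a⁻¹b⁻¹ab` and `x^g = g⁻¹xg`. -/
theorem commutator_identity_stmt11 {G : Type*} [Group G] (ρ₀ ρ₁ ρ₂ : G)
    (h0 : ρ₀ ^ 2 = 1) (h1 : ρ₁ ^ 2 = 1) (h2 : ρ₂ ^ 2 = 1)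
    (h02 : ρ₀ * ρ₂ = ρ₂ * ρ₀)
    (hgen : Subgroup.closure {ρ₀, ρ₁, ρ₂} = ⊤) :
    ρ₀⁻¹ * ((ρ₁ * ρ₂) ^ 4)⁻¹ * ρ₀ * (ρ₁ * ρ₂) ^ 4 =
      ((ρ₁ * ρ₂)⁻¹ * (((ρ₀ * ρ₁) ^ 2)⁻¹ * ρ₂⁻¹ * (ρ₀ * ρ₁) ^ 2 * ρ₂) * (ρ₁ * ρ₂)) *
      (((ρ₁ * ρ₂) ^ 3)⁻¹ *
        (((ρ₀ * ρ₁) ^ 2)⁻¹ * ρ₂⁻¹ * (ρ₀ * ρ₁) ^ 2 * ρ₂) * (ρ₁ * ρ₂) ^ 3) := by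
  have m0 : ∀ x : G, ρ₀ * (ρ₀ * x) = x := fun x => by
    rw [← mul_assoc, ← sq, h0, one_mul]
  have m1 : ∀ x : G, ρ₁ * (ρ₁ * x) = x := fun x => by
    rw [← mul_assoc, ← sq, h1, one_mul]
  have m2 : ∀ x : G, ρ₂ * (ρ₂ * x) = x := fun x => by
    rw [← mul_assoc, ← sq, h2, one_mul]
  have i0 : ρ₀⁻¹ = ρ₀ := by rw [inv_eq_iff_mul_eq_one, ← sq, h0]
  have i1 : ρ₁⁻¹ = ρ₁ := by rw [inv_eq_iff_mul_eq_one, ← sq, h1]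
  have i2 : ρ₂⁻¹ = ρ₂ := by rw [inv_eq_iff_mul_eq_one, ← sq, h2]
  have c : ∀ x : G, ρ₀ * (ρ₂ * x) = ρ₂ * (ρ₀ * x) := fun x => by
    rw [← mul_assoc, h02, mul_assoc]
  simp only [pow_succ, pow_zero, one_mul, mul_inv_rev, i0, i1, i2, mul_assoc, m0, m1, m2, c,
    mul_one, h02]
end

section
/- Let G be a group generated by involutions ρ₀, ρ₁, ρ₂ such that ρ₀ρ₂ = ρ₂ρ₀ and [(ρ₀ρ₁)², ρ₂] = 1. Then the cyclic subgroup generated by [ρ₀, ρ₁] = (ρ₀ρ₁)² is normal in G, and the commutator subgroup G' equals ⟨[ρ₀, ρ₁]⟩ · ⟨[ρ₁, ρ₂]⟩. -/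
open Pointwise
open scoped commutatorElement

/-!
Write `a = (ρ₀ρ₁)² = ⁅ρ₀, ρ₁⁆` and `b = (ρ₁ρ₂)² = ⁅ρ₁, ρ₂⁆`. Each generator conjugates `a` to `a` or
`a⁻¹`, and `b` to `b` or `b⁻¹`; the only non-obvious case is `ρ₀ b ρ₀ = b`, which holds because
`ρ₀ (ρ₁ρ₂) ρ₀ = a ρ₁ρ₂` while `ρ₁ρ₂` inverts `a`. So `⟨a⟩` and `N = ⟨a, b⟩` are normal. The images
of the generators in `G ⧸ N` commute pairwise, hence `G' = N`, and `N = ⟨a⟩⟨b⟩` as `⟨a⟩` is normal.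
-/

namespace Subgroup

variable {G : Type*} [Group G]

theorem conj_mem_closure_of_forall {T : Set G} {g : G}
    (hT : ∀ t ∈ T, g * t * g⁻¹ ∈ closure T) {x : G} (hx : x ∈ closure T) :
    g * x * g⁻¹ ∈ closure T :=
  (closure_le ((closure T).comap (MulAut.conj g).toMonoidHom)).mpr hT hx

theorem normal_of_conj_mem_of_sq_eq_one {S : Set G} (hS : closure S = ⊤)
    (hS_sq : ∀ s ∈ S, s ^ 2 = 1) {H : Subgroup G} (hH : ∀ s ∈ S, ∀ h ∈ H, s * h * s⁻¹ ∈ H) :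
    H.Normal := by
  refine normalizer_eq_top_iff.mp (top_unique (hS ▸ (closure_le _).mpr fun s hs => ?_))
  refine mem_normalizer_iff.mpr fun h => ⟨hH s hs h, fun hconj => ?_⟩
  have hconj_twice : s * (s * h * s⁻¹) * s⁻¹ = h :=
    calc _ = s ^ 2 * h * (s ^ 2)⁻¹ := by rw [sq]; group
      _ = h := by rw [hS_sq s hs]; group
  exact hconj_twice ▸ hH s hs _ hconj

theorem closure_normal_of_conj_mem {S T : Set G} (hS : closure S = ⊤)
    (hS_sq : ∀ s ∈ S, s ^ 2 = 1) (hT : ∀ s ∈ S, ∀ t ∈ T, s * t * s⁻¹ ∈ closure T) :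
    (closure T).Normal :=
  normal_of_conj_mem_of_sq_eq_one hS hS_sq fun s hs _ => conj_mem_closure_of_forall (hT s hs)

theorem commutator_le_of_commutatorElement_mem {S : Set G} (hS : closure S = ⊤)
    {N : Subgroup G} [N.Normal] (hN : ∀ s ∈ S, ∀ t ∈ S, ⁅s, t⁆ ∈ N) :
    _root_.commutator G ≤ N := by
  rw [← Normal.quotient_commutative_iff_commutator_le]
  set S' := QuotientGroup.mk' N '' S
  have hS'_comm : ∀ u ∈ S', ∀ v ∈ S', u * v = v * u := by
    rintro _ ⟨s, hs, rfl⟩ _ ⟨t, ht, rfl⟩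
    rw [← commutatorElement_eq_one_iff_mul_comm, ← map_commutatorElement, QuotientGroup.mk'_apply,
      QuotientGroup.eq_one_iff]
    exact hN s hs t ht
  have hS'_top : closure S' = ⊤ := by
    rw [← MonoidHom.map_closure, hS, ← MonoidHom.range_eq_map, QuotientGroup.range_mk']
  have hcentral := closure_le_centralizer_centralizer S'
  rw [hS'_top] at hcentral
  exact ⟨⟨fun u v =>
    Set.centralizer_centralizer_comm_of_comm hS'_comm u (hcentral trivial) v (hcentral trivial)⟩⟩

end Subgroup

section ThreeInvolutions

variable {G : Type*} [Group G] {x y z : G}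

theorem inv_eq_self_of_sq_eq_one (hx : x ^ 2 = 1) : x⁻¹ = x :=
  inv_eq_of_mul_eq_one_right (by rw [← sq, hx])

theorem commutatorElement_eq_mul_sq (hx : x ^ 2 = 1) (hy : y ^ 2 = 1) : ⁅x, y⁆ = (x * y) ^ 2 := by
  rw [commutatorElement_def, inv_eq_self_of_sq_eq_one hx, inv_eq_self_of_sq_eq_one hy, sq,
    mul_assoc]

theorem conj_mul_pow_left (hx : x ^ 2 = 1) (hy : y ^ 2 = 1) (n : ℕ) :
    x * (x * y) ^ n * x⁻¹ = ((x * y) ^ n)⁻¹ := by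
  rw [← conj_pow, ← inv_pow, mul_inv_rev, inv_eq_self_of_sq_eq_one hx,
    inv_eq_self_of_sq_eq_one hy, ← mul_assoc, ← sq, hx, one_mul]

theorem conj_mul_pow_right (hx : x ^ 2 = 1) (hy : y ^ 2 = 1) (n : ℕ) :
    y * (x * y) ^ n * y⁻¹ = ((x * y) ^ n)⁻¹ := by
  rw [← conj_pow, ← inv_pow, mul_inv_rev, inv_eq_self_of_sq_eq_one hx,
    inv_eq_self_of_sq_eq_one hy, mul_assoc, mul_assoc, ← sq, hy, mul_one]

theorem conj_mul_sq_eq_self (hx : x ^ 2 = 1) (hy : y ^ 2 = 1) (hxz : Commute x z)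
    (ha : Commute ((x * y) ^ 2) z) : x * (y * z) ^ 2 * x⁻¹ = (y * z) ^ 2 := by
  set a := (x * y) ^ 2
  have hconj_x : x * (y * z) * x⁻¹ = a * (y * z) :=
    calc x * (y * z) * x⁻¹ = x * y * x⁻¹ * (x * z * x⁻¹) := by group
      _ = a * y⁻¹ * z := by
        rw [hxz.mul_inv_cancel, inv_eq_self_of_sq_eq_one hx]; simp only [a, sq]; group
      _ = a * (y * z) := by rw [inv_eq_self_of_sq_eq_one hy, mul_assoc]
  have hconj_yz : y * z * a * (y * z)⁻¹ = a⁻¹ :=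
    calc y * z * a * (y * z)⁻¹ = y * (z * a * z⁻¹) * y⁻¹ := by group
      _ = a⁻¹ := by rw [ha.symm.mul_inv_cancel, conj_mul_pow_right hx hy]
  calc x * (y * z) ^ 2 * x⁻¹ = (a * (y * z)) ^ 2 := by rw [← hconj_x, conj_pow]
    _ = a * (y * z * a * (y * z)⁻¹) * (y * z) ^ 2 := by simp only [sq]; group
    _ = (y * z) ^ 2 := by rw [hconj_yz]; group

theorem zpowers_mul_sq_normal (hS : Subgroup.closure {x, y, z} = ⊤) (hx : x ^ 2 = 1)
    (hy : y ^ 2 = 1) (hz : z ^ 2 = 1) (ha : Commute ((x * y) ^ 2) z) :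
    (Subgroup.zpowers ((x * y) ^ 2)).Normal := by
  rw [Subgroup.zpowers_eq_closure]
  refine Subgroup.closure_normal_of_conj_mem hS
    (by simpa only [Set.forall_mem_insert, Set.mem_singleton_iff, forall_eq] using ⟨hx, hy, hz⟩) ?_
  simp only [Set.forall_mem_insert, Set.mem_singleton_iff, forall_eq]
  refine ⟨?_, ?_, ?_⟩
  · rw [conj_mul_pow_left hx hy]; exact inv_mem (Subgroup.subset_closure rfl)
  · rw [conj_mul_pow_right hx hy]; exact inv_mem (Subgroup.subset_closure rfl)
  · rw [ha.symm.mul_inv_cancel]; exact Subgroup.subset_closure rfl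

theorem closure_mul_sq_normal (hS : Subgroup.closure {x, y, z} = ⊤) (hx : x ^ 2 = 1)
    (hy : y ^ 2 = 1) (hz : z ^ 2 = 1) (hxz : Commute x z) (ha : Commute ((x * y) ^ 2) z) :
    (Subgroup.closure {(x * y) ^ 2, (y * z) ^ 2}).Normal := by
  have haN : (x * y) ^ 2 ∈ Subgroup.closure {(x * y) ^ 2, (y * z) ^ 2} :=
    Subgroup.subset_closure (by simp)
  have hbN : (y * z) ^ 2 ∈ Subgroup.closure {(x * y) ^ 2, (y * z) ^ 2} :=
    Subgroup.subset_closure (by simp)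
  refine Subgroup.closure_normal_of_conj_mem hS
    (by simpa only [Set.forall_mem_insert, Set.mem_singleton_iff, forall_eq] using ⟨hx, hy, hz⟩) ?_
  simp only [Set.forall_mem_insert, Set.mem_singleton_iff, forall_eq]
  refine ⟨⟨?_, ?_⟩, ⟨?_, ?_⟩, ⟨?_, ?_⟩⟩
  · rw [conj_mul_pow_left hx hy]; exact inv_mem haN
  · rw [conj_mul_sq_eq_self hx hy hxz ha]; exact hbN
  · rw [conj_mul_pow_right hx hy]; exact inv_mem haN
  · rw [conj_mul_pow_left hy hz]; exact inv_mem hbN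
  · rw [ha.symm.mul_inv_cancel]; exact haN
  · rw [conj_mul_pow_right hy hz]; exact inv_mem hbN

theorem commutator_eq_closure_mul_sq (hS : Subgroup.closure {x, y, z} = ⊤) (hx : x ^ 2 = 1)
    (hy : y ^ 2 = 1) (hz : z ^ 2 = 1) (hxz : Commute x z) (ha : Commute ((x * y) ^ 2) z) :
    commutator G = Subgroup.closure {(x * y) ^ 2, (y * z) ^ 2} := by
  set N := Subgroup.closure {(x * y) ^ 2, (y * z) ^ 2}
  have := closure_mul_sq_normal hS hx hy hz hxz ha
  have hxy : ⁅x, y⁆ ∈ N := commutatorElement_eq_mul_sq hx hy ▸ Subgroup.subset_closure (by simp)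
  have hyz : ⁅y, z⁆ ∈ N := commutatorElement_eq_mul_sq hy hz ▸ Subgroup.subset_closure (by simp)
  have hxz' : ⁅x, z⁆ ∈ N := commutatorElement_eq_one_iff_commute.mpr hxz ▸ one_mem N
  have hswap {s t : G} (h : ⁅s, t⁆ ∈ N) : ⁅t, s⁆ ∈ N := commutatorElement_inv s t ▸ inv_mem h
  refine le_antisymm (Subgroup.commutator_le_of_commutatorElement_mem hS ?_) ?_
  · simp only [Set.forall_mem_insert, Set.mem_singleton_iff, forall_eq, commutatorElement_self,
      one_mem, true_and, and_true]
    exact ⟨⟨hxy, hxz'⟩, ⟨hswap hxy, hyz⟩, hswap hxz', hswap hyz⟩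
  · rw [commutator_def, Subgroup.closure_le, Set.insert_subset_iff, Set.singleton_subset_iff,
      ← commutatorElement_eq_mul_sq hx hy, ← commutatorElement_eq_mul_sq hy hz]
    exact ⟨Subgroup.commutator_mem_commutator trivial trivial,
      Subgroup.commutator_mem_commutator trivial trivial⟩

end ThreeInvolutions

/-- If `G` is generated by involutions `ρ₀, ρ₁, ρ₂` with `ρ₀ρ₂ = ρ₂ρ₀` and
`[(ρ₀ρ₁)², ρ₂] = 1`, then `⟨[ρ₀,ρ₁]⟩ = ⟨(ρ₀ρ₁)²⟩` is normal in `G` and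
`G' = ⟨[ρ₀,ρ₁]⟩ · ⟨[ρ₁,ρ₂]⟩` (as a product of sets). -/
theorem derived_eq_product_stmt13 {G : Type*} [Group G] (ρ₀ ρ₁ ρ₂ : G)
    (h0 : ρ₀ ^ 2 = 1) (h1 : ρ₁ ^ 2 = 1) (h2 : ρ₂ ^ 2 = 1)
    (h02 : ρ₀ * ρ₂ = ρ₂ * ρ₀)
    (hgen : Subgroup.closure {ρ₀, ρ₁, ρ₂} = ⊤)
    (hcomm : ((ρ₀ * ρ₁) ^ 2)⁻¹ * ρ₂⁻¹ * (ρ₀ * ρ₁) ^ 2 * ρ₂ = 1) :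
    (Subgroup.zpowers ((ρ₀ * ρ₁) ^ 2)).Normal ∧
      (commutator G : Set G) =
        (Subgroup.zpowers ((ρ₀ * ρ₁) ^ 2) : Set G) *
          (Subgroup.zpowers ((ρ₁ * ρ₂) ^ 2) : Set G) := by
  have ha : Commute ((ρ₀ * ρ₁) ^ 2) ρ₂ :=
    Commute.inv_inv_iff.mp <| commutatorElement_eq_one_iff_commute.mp <| by
      rwa [commutatorElement_def, inv_inv, inv_inv]
  have hA := zpowers_mul_sq_normal hgen h0 h1 h2 ha
  refine ⟨hA, ?_⟩
  rw [commutator_eq_closure_mul_sq hgen h0 h1 h2 h02 ha, ← Set.singleton_union,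
    Subgroup.closure_union, ← Subgroup.zpowers_eq_closure, ← Subgroup.zpowers_eq_closure,
    Subgroup.normal_mul]
end

section
/- Let G be a finite group of order 2^n generated by three involutions ρ₀, ρ₁, ρ₂ such that (ρ₀ρ₂)² = 1, ρ₀ρ₁ has order 2^s and ρ₁ρ₂ has order 2^t with 2 ≤ s ≤ t, the set {ρ₀, ρ₁, ρ₂} is a minimal generating set, and ⟨ρ₀, ρ₁⟩ ∩ ⟨ρ₁, ρ₂⟩ = ⟨ρ₁⟩. If 2t ≥ n−1, then the subgroup N = ⟨(ρ₁ρ₂)^{2^{t−1}}⟩ of order 2 is normal in G. -/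
open Subgroup

private lemma aux_orderOf_pow_half {G : Type*} [Group G] {g : G} {u : ℕ} (hu : 1 ≤ u)
    (h : orderOf g = 2 ^ u) : orderOf (g ^ (2 ^ (u - 1))) = 2 := by
  rw [orderOf_pow' _ (by positivity : (2:ℕ) ^ (u - 1) ≠ 0), h]
  have hgcd : Nat.gcd (2 ^ u) (2 ^ (u - 1)) = 2 ^ (u - 1) :=
    Nat.gcd_eq_right (pow_dvd_pow 2 (by omega))
  have hu1 : u - (u - 1) = 1 := by omega
  rw [hgcd, Nat.pow_div (by omega) (by norm_num), hu1, pow_one]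

private lemma aux_unique_involution {G : Type*} [Group G] {g x : G} {u : ℕ} (hu : 1 ≤ u)
    (h : orderOf g = 2 ^ u) (hx : x ∈ zpowers g) (hx2 : x * x = 1) (hx1 : x ≠ 1) :
    x = g ^ (2 ^ (u - 1)) := by
  obtain ⟨m, rfl⟩ := mem_zpowers_iff.mp hx
  set w : G := g ^ (2 ^ (u - 1)) with hw
  have hw2 : w * w = 1 := by
    have h2 := aux_orderOf_pow_half hu h
    have := pow_orderOf_eq_one w
    rwa [h2, pow_two] at this
  have hdvd : ((2 : ℤ) ^ u) ∣ 2 * m := by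
    have : (orderOf g : ℤ) ∣ m + m := orderOf_dvd_iff_zpow_eq_one.mpr (by
      rw [zpow_add]; exact hx2)
    rw [h] at this
    push_cast at this
    convert this using 1
    ring
  have hdvd' : ((2 : ℤ) ^ (u - 1)) ∣ m := by
    have h2 : (2 : ℤ) ^ u = 2 * 2 ^ (u - 1) := by
      rw [← pow_succ']
      congr 1
      omega
    rw [h2] at hdvd
    exact (mul_dvd_mul_iff_left (two_ne_zero)).mp hdvd
  obtain ⟨j, hj⟩ := hdvd'
  have hxw : g ^ m = w ^ j := by
    rw [hj, zpow_mul, hw, ← zpow_natCast g (2 ^ (u - 1))]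
    norm_cast
  rcases Int.even_or_odd j with ⟨i, hi⟩ | ⟨i, hi⟩
  · exfalso
    apply hx1
    rw [hxw, hi, ← two_mul, zpow_mul, zpow_two, hw2, one_zpow]
  · rw [hxw, hi, zpow_add, zpow_mul, zpow_two, hw2, one_zpow, one_mul, zpow_one]

private lemma aux_exists_index_two {G : Type*} [Group G] {n : ℕ} (hcard : Nat.card G = 2 ^ n)
    {H : Subgroup G} (hH : H ≠ ⊤) :
    ∃ M : Subgroup G, H ≤ M ∧ M.Normal ∧ M.index = 2 := by
  have hfin : Finite G := Nat.finite_of_card_ne_zero (by rw [hcard]; positivity)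
  have hfinS : Finite (Subgroup G) :=
    Finite.of_injective (fun K : Subgroup G => (K : Set G)) SetLike.coe_injective
  obtain ⟨M, hcoatom, hHM⟩ : ∃ M : Subgroup G, IsCoatom M ∧ H ≤ M := by
    rcases eq_top_or_exists_le_coatom H with h | ⟨M, hM, hle⟩
    · exact absurd h hH
    · exact ⟨M, hM, hle⟩
  haveI : Fact (Nat.Prime 2) := ⟨Nat.prime_two⟩
  have hp : IsPGroup 2 G := IsPGroup.of_card hcard
  haveI hnil : Group.IsNilpotent G := hp.isNilpotent
  have hnormal : M.Normal :=
    Subgroup.NormalizerCondition.normal_of_coatom M normalizerCondition_of_isNilpotent hcoatom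
  haveI := hnormal
  refine ⟨M, hHM, hnormal, ?_⟩
  set π := QuotientGroup.mk' M with hπ
  have hπsurj : Function.Surjective π := QuotientGroup.mk'_surjective M
  have hsub : ∀ K : Subgroup (G ⧸ M), K = ⊥ ∨ K = ⊤ := by
    intro K
    have hMle : M ≤ K.comap π := by
      intro m hm
      simp only [Subgroup.mem_comap]
      have : π m = 1 := (QuotientGroup.eq_one_iff m).mpr hm
      rw [this]; exact K.one_mem
    rcases hMle.lt_or_eq with hlt | heq
    · right
      have htop : K.comap π = ⊤ := hcoatom.2 _ hlt
      have hmap := Subgroup.map_comap_eq_self_of_surjective hπsurj K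
      rw [htop] at hmap
      rw [← hmap]
      exact Subgroup.map_top_of_surjective π hπsurj
    · left
      apply (Subgroup.eq_bot_iff_forall K).mpr
      intro x hxK
      obtain ⟨g, rfl⟩ := hπsurj x
      have : g ∈ M := by rw [heq]; exact hxK
      exact (QuotientGroup.eq_one_iff g).mpr this
  obtain ⟨g, hg⟩ : ∃ g : G, g ∉ M := by
    by_contra hcon
    push_neg at hcon
    exact hcoatom.1 ((Subgroup.eq_top_iff' M).mpr hcon)
  have hx1 : π g ≠ 1 := fun h => hg ((QuotientGroup.eq_one_iff g).mp h)
  have hdvd : Nat.card (G ⧸ M) ∣ 2 ^ n := by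
    rw [← Subgroup.index_eq_card, ← hcard]
    exact Subgroup.index_dvd_card M
  obtain ⟨k, hk, hcardQ⟩ := (Nat.dvd_prime_pow Nat.prime_two).mp hdvd
  have hktop : ∀ w : G ⧸ M, w ≠ 1 → zpowers w = ⊤ := by
    intro w hw
    rcases hsub (zpowers w) with hbot | htop
    · exact absurd ((Subgroup.eq_bot_iff_forall _).mp hbot w (mem_zpowers w)) hw
    · exact htop
  have hordg : orderOf (π g) = 2 ^ k := by
    rw [← Nat.card_zpowers, hktop _ hx1, ← hcardQ]
    exact Subgroup.card_top
  have hk1 : 1 ≤ k := by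
    rcases Nat.eq_zero_or_pos k with h0 | h1
    · exfalso
      rw [h0, pow_zero, orderOf_eq_one_iff] at hordg
      exact hx1 hordg
    · exact h1
  set y := (π g) ^ (2 ^ (k - 1)) with hy
  have hordy : orderOf y = 2 := aux_orderOf_pow_half hk1 hordg
  have hy1 : y ≠ 1 := by
    intro h
    rw [h, orderOf_one] at hordy
    norm_num at hordy
  have hfinal : Nat.card (G ⧸ M) = 2 := by
    rw [← Subgroup.card_top (G := G ⧸ M), ← hktop y hy1, Nat.card_zpowers, hordy]
  rw [Subgroup.index_eq_card, hfinal]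

/-- Let `G` be a string C-group of rank 3, order `2^n` and type `{2^s, 2^t}` with
`2 ≤ s ≤ t`. If `2t ≥ n - 1`, then `N = ⟨(ρ₁ρ₂)^(2^(t-1))⟩` has order `2` and is
normal in `G`. -/
theorem normal_subgroup_stmt15 {G : Type*} [Group G] (ρ₀ ρ₁ ρ₂ : G)
    (n s t : ℕ)
    (hcard : Nat.card G = 2 ^ n)
    (h0 : ρ₀ ^ 2 = 1) (h1 : ρ₁ ^ 2 = 1) (h2 : ρ₂ ^ 2 = 1)
    (h02 : (ρ₀ * ρ₂) ^ 2 = 1)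
    (hs : orderOf (ρ₀ * ρ₁) = 2 ^ s) (ht : orderOf (ρ₁ * ρ₂) = 2 ^ t)
    (hs2 : 2 ≤ s) (hst : s ≤ t)
    (hgen : Subgroup.closure {ρ₀, ρ₁, ρ₂} = ⊤)
    (hmin : ∀ T : Set G, T ⊂ {ρ₀, ρ₁, ρ₂} → Subgroup.closure T ≠ ⊤)
    (hint : Subgroup.closure {ρ₀, ρ₁} ⊓ Subgroup.closure {ρ₁, ρ₂}
      = Subgroup.closure {ρ₁})
    (h2t : 2 * t ≥ n - 1) :
    Nat.card (Subgroup.zpowers ((ρ₁ * ρ₂) ^ (2 ^ (t - 1)))) = 2 ∧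
      (Subgroup.zpowers ((ρ₁ * ρ₂) ^ (2 ^ (t - 1)))).Normal := by
  have hfin : Finite G := Nat.finite_of_card_ne_zero (by rw [hcard]; positivity)
  set a := ρ₁ * ρ₂ with ha
  have ht2 : 2 ≤ t := hs2.trans hst
  have i0 : ρ₀ * ρ₀ = 1 := by rw [← pow_two]; exact h0
  have i1 : ρ₁ * ρ₁ = 1 := by rw [← pow_two]; exact h1
  have i2 : ρ₂ * ρ₂ = 1 := by rw [← pow_two]; exact h2
  have inv0 : ρ₀⁻¹ = ρ₀ := by rw [inv_eq_iff_mul_eq_one]; exact i0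
  have inv1 : ρ₁⁻¹ = ρ₁ := by rw [inv_eq_iff_mul_eq_one]; exact i1
  have inv2 : ρ₂⁻¹ = ρ₂ := by rw [inv_eq_iff_mul_eq_one]; exact i2
  have comm02 : ρ₀ * ρ₂ = ρ₂ * ρ₀ := by
    have h' : (ρ₀ * ρ₂) * (ρ₀ * ρ₂) = 1 := by rw [← pow_two]; exact h02
    have h'' := eq_inv_of_mul_eq_one_right h'
    rw [mul_inv_rev, inv0, inv2] at h''
    exact h''
  have rinva : ρ₁ * a * ρ₁⁻¹ = a⁻¹ := by
    rw [inv1, ha, mul_inv_rev, inv1, inv2, ← mul_assoc, i1, one_mul]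
  have r2inva : ρ₂ * a * ρ₂⁻¹ = a⁻¹ := by
    rw [inv2, ha, mul_inv_rev, inv1, inv2, ← mul_assoc, mul_assoc (ρ₂ * ρ₁), i2, mul_one]
  -- moved commutation for powers
  have m1 : ∀ k : ℤ, ρ₁ * a ^ k = a ^ (-k) * ρ₁ := by
    intro k
    have hce : ρ₁ * a ^ k * ρ₁⁻¹ = a ^ (-k) := by
      rw [← conj_zpow, rinva, inv_zpow, ← zpow_neg]
    calc ρ₁ * a ^ k = (ρ₁ * a ^ k * ρ₁⁻¹) * ρ₁ := by rw [mul_assoc, inv_mul_cancel, mul_one]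
    _ = a ^ (-k) * ρ₁ := by rw [hce]
  have m2 : ∀ k : ℤ, ρ₂ * a ^ k = a ^ (-k) * ρ₂ := by
    intro k
    have hce : ρ₂ * a ^ k * ρ₂⁻¹ = a ^ (-k) := by
      rw [← conj_zpow, r2inva, inv_zpow, ← zpow_neg]
    calc ρ₂ * a ^ k = (ρ₂ * a ^ k * ρ₂⁻¹) * ρ₂ := by rw [mul_assoc, inv_mul_cancel, mul_one]
    _ = a ^ (-k) * ρ₂ := by rw [hce]
  have hano2 : a * a ≠ 1 := by
    intro h
    have hdvd : orderOf a ∣ 2 := orderOf_dvd_iff_pow_eq_one.mpr (by rw [pow_two]; exact h)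
    rw [ht] at hdvd
    have h4 : (4:ℕ) ≤ 2 ^ t := by
      calc (4:ℕ) = 2 ^ 2 := by norm_num
      _ ≤ 2 ^ t := Nat.pow_le_pow_right (by norm_num) ht2
    have := Nat.le_of_dvd (by norm_num) hdvd
    omega
  set z := a ^ (2 ^ (t - 1)) with hz
  have hordz : orderOf z = 2 := aux_orderOf_pow_half (by omega) ht
  have hzz : z * z = 1 := by
    have := pow_orderOf_eq_one z
    rwa [hordz, pow_two] at this
  have hz1 : z ≠ 1 := by
    intro h
    rw [h, orderOf_one] at hordz
    norm_num at hordz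
  have hinvz : z⁻¹ = z := by rw [inv_eq_iff_mul_eq_one]; exact hzz
  have hza : Commute a z := (Commute.refl a).pow_right _
  have hzmem : z ∈ zpowers a := by rw [hz]; exact pow_mem (mem_zpowers a) _
  -- commutation with ρ₁ and ρ₂
  have hcomm1 : ρ₁ * z = z * ρ₁ := by
    have hc : ρ₁ * z * ρ₁⁻¹ = z := by
      calc ρ₁ * z * ρ₁⁻¹ = (ρ₁ * a * ρ₁⁻¹) ^ (2 ^ (t - 1)) := conj_pow.symm
      _ = (a⁻¹) ^ (2 ^ (t - 1)) := by rw [rinva]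
      _ = z⁻¹ := by rw [inv_pow]
      _ = z := hinvz
    calc ρ₁ * z = (ρ₁ * z * ρ₁⁻¹) * ρ₁ := by rw [mul_assoc, inv_mul_cancel, mul_one]
    _ = z * ρ₁ := by rw [hc]
  have hcomm2 : ρ₂ * z = z * ρ₂ := by
    have hc : ρ₂ * z * ρ₂⁻¹ = z := by
      calc ρ₂ * z * ρ₂⁻¹ = (ρ₂ * a * ρ₂⁻¹) ^ (2 ^ (t - 1)) := conj_pow.symm
      _ = (a⁻¹) ^ (2 ^ (t - 1)) := by rw [r2inva]
      _ = z⁻¹ := by rw [inv_pow]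
      _ = z := hinvz
    calc ρ₂ * z = (ρ₂ * z * ρ₂⁻¹) * ρ₂ := by rw [mul_assoc, inv_mul_cancel, mul_one]
    _ = z * ρ₂ := by rw [hc]
  -- distinctness
  have hne01 : ρ₀ ≠ ρ₁ := by
    intro h
    have h' : ρ₀ * ρ₁ = 1 := by rw [h]; exact i1
    rw [h', orderOf_one] at hs
    have : (4:ℕ) ≤ 2 ^ s := by
      calc (4:ℕ) = 2 ^ 2 := by norm_num
      _ ≤ 2 ^ s := Nat.pow_le_pow_right (by norm_num) hs2
    omega
  have hne12 : ρ₁ ≠ ρ₂ := by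
    intro h
    have h' : a = 1 := by rw [ha, h]; exact i2
    rw [h', orderOf_one] at ht
    have : (4:ℕ) ≤ 2 ^ t := by
      calc (4:ℕ) = 2 ^ 2 := by norm_num
      _ ≤ 2 ^ t := Nat.pow_le_pow_right (by norm_num) ht2
    omega
  have haD : a ∈ closure ({ρ₁, ρ₂} : Set G) :=
    mul_mem (subset_closure (by simp)) (subset_closure (by simp))
  have hne02 : ρ₀ ≠ ρ₂ := by
    intro h
    have hpair : ({ρ₀, ρ₁} : Set G) = {ρ₁, ρ₂} := by rw [h]; exact Set.pair_comm ρ₂ ρ₁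
    have h' := hint
    rw [hpair, inf_idem] at h'
    have hamem : a ∈ closure ({ρ₁} : Set G) := by rw [← h']; exact haD
    rw [← Subgroup.zpowers_eq_closure] at hamem
    obtain ⟨m, hm⟩ := mem_zpowers_iff.mp hamem
    apply hano2
    have : a * a = ρ₁ ^ (m + m) := by rw [zpow_add, hm]
    rw [this, ← two_mul, zpow_mul, zpow_two, i1, one_zpow]
  -- strict subset facts
  have hss12 : ({ρ₁, ρ₂} : Set G) ⊂ {ρ₀, ρ₁, ρ₂} := by
    constructor
    · intro x hx
      simp only [Set.mem_insert_iff, Set.mem_singleton_iff] at hx ⊢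
      tauto
    · intro hsub
      have h' : ρ₀ ∈ ({ρ₁, ρ₂} : Set G) := hsub (by simp)
      simp only [Set.mem_insert_iff, Set.mem_singleton_iff] at h'
      rcases h' with h' | h'
      · exact hne01 h'
      · exact hne02 h'
  have hss01 : ({ρ₀, ρ₁} : Set G) ⊂ {ρ₀, ρ₁, ρ₂} := by
    constructor
    · intro x hx
      simp only [Set.mem_insert_iff, Set.mem_singleton_iff] at hx ⊢
      tauto
    · intro hsub
      have h' : ρ₂ ∈ ({ρ₀, ρ₁} : Set G) := hsub (by simp)
      simp only [Set.mem_insert_iff, Set.mem_singleton_iff] at h'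
      rcases h' with h' | h'
      · exact hne02 h'.symm
      · exact hne12 h'.symm
  have hρ₀D : ρ₀ ∉ closure ({ρ₁, ρ₂} : Set G) := by
    intro hmem
    apply hmin {ρ₁, ρ₂} hss12
    rw [eq_top_iff, ← hgen, closure_le]
    rintro x hx
    simp only [Set.mem_insert_iff, Set.mem_singleton_iff] at hx
    rcases hx with rfl | rfl | rfl
    · exact hmem
    · exact subset_closure (by simp)
    · exact subset_closure (by simp)
  -- main reduction: it suffices that ρ₀ commutes with z
  suffices hc0 : ρ₀ * z = z * ρ₀ by
    have hcent : ∀ g : G, g * z = z * g := by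
      have hle : Subgroup.closure {ρ₀, ρ₁, ρ₂} ≤ Subgroup.centralizer {z} := by
        rw [closure_le]
        rintro x hx
        simp only [Set.mem_insert_iff, Set.mem_singleton_iff] at hx
        rcases hx with rfl | rfl | rfl
        · exact Subgroup.mem_centralizer_singleton_iff.mpr hc0
        · exact Subgroup.mem_centralizer_singleton_iff.mpr hcomm1
        · exact Subgroup.mem_centralizer_singleton_iff.mpr hcomm2
      intro g
      have hg : g ∈ Subgroup.centralizer {z} := hle (by rw [hgen]; trivial)
      exact Subgroup.mem_centralizer_singleton_iff.mp hg
    constructor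
    · rw [Nat.card_zpowers]; exact hordz
    · constructor
      intro x hx g
      obtain ⟨m, rfl⟩ := mem_zpowers_iff.mp hx
      have hcomz : Commute g z := hcent g
      have : g * z ^ m * g⁻¹ = z ^ m := by
        rw [(hcomz.zpow_right m).eq, mul_assoc, mul_inv_cancel, mul_one]
      rw [this]
      exact zpow_mem (mem_zpowers z) m
  -- the conjugate generator
  set c := ρ₀ * a * ρ₀⁻¹ with hcdef
  have hordc : orderOf c = 2 ^ t := by
    have h' := orderOf_injective (MulAut.conj ρ₀).toMonoidHom (MulEquiv.injective _) a
    simp only [MulEquiv.coe_toMonoidHom, MulAut.conj_apply] at h'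
    rw [← hcdef, ht] at h'
    exact h'
  have hz'c : c ^ (2 ^ (t - 1)) = ρ₀ * z * ρ₀⁻¹ := by
    rw [hcdef, conj_pow, ← hz]
  have hz'z' : (ρ₀ * z * ρ₀⁻¹) * (ρ₀ * z * ρ₀⁻¹) = 1 := by
    have h' : (ρ₀ * z * ρ₀⁻¹) * (ρ₀ * z * ρ₀⁻¹) = ρ₀ * (z * z) * ρ₀⁻¹ := by group
    rw [h', hzz, mul_one, mul_inv_cancel]
  have hz'1 : ρ₀ * z * ρ₀⁻¹ ≠ 1 := by
    intro h'
    apply hz1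
    have h'' : z = ρ₀⁻¹ * (ρ₀ * z * ρ₀⁻¹) * ρ₀ := by group
    rw [h', mul_one, inv_mul_cancel] at h''
    exact h''
  -- the subgroup S = A ∪ Aρ₁
  set S : Subgroup G := {
    carrier := {x | ∃ k : ℤ, x = a ^ k ∨ x = a ^ k * ρ₁}
    one_mem' := ⟨0, Or.inl (by simp)⟩
    mul_mem' := by
      rintro x y ⟨k, hk | hk⟩ ⟨l, hl | hl⟩ <;> subst hk <;> subst hl
      · exact ⟨k + l, Or.inl (by rw [zpow_add])⟩
      · exact ⟨k + l, Or.inr (by rw [← mul_assoc, ← zpow_add])⟩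
      · refine ⟨k - l, Or.inr ?_⟩
        rw [mul_assoc, m1 l, ← mul_assoc, ← zpow_add, ← sub_eq_add_neg]
      · refine ⟨k - l, Or.inl ?_⟩
        have h' : a ^ k * ρ₁ * (a ^ l * ρ₁) = a ^ k * (ρ₁ * a ^ l) * ρ₁ := by group
        rw [h', m1 l, ← mul_assoc, ← zpow_add, ← sub_eq_add_neg, mul_assoc, i1, mul_one]
    inv_mem' := by
      rintro x ⟨k, hk | hk⟩ <;> subst hk
      · exact ⟨-k, Or.inl (by rw [zpow_neg])⟩
      · refine ⟨k, Or.inr ?_⟩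
        rw [mul_inv_rev, inv1, ← zpow_neg, m1 (-k), neg_neg]
  } with hSdef
  have hmemS : ∀ x : G, x ∈ S ↔ ∃ k : ℤ, x = a ^ k ∨ x = a ^ k * ρ₁ := fun x => Iff.rfl
  have haS : a ∈ S := (hmemS a).mpr ⟨1, Or.inl (zpow_one a).symm⟩
  have hρ₁S : ρ₁ ∈ S := (hmemS ρ₁).mpr ⟨0, Or.inr (by simp)⟩
  have hAleS : zpowers a ≤ S := zpowers_le.mpr haS
  have hSle : S ≤ closure ({ρ₁, ρ₂} : Set G) := by
    intro x hx
    obtain ⟨k, hk | hk⟩ := (hmemS x).mp hx <;> subst hk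
    · exact zpow_mem haD k
    · exact mul_mem (zpow_mem haD k) (subset_closure (by simp))
  have hρ₁notA : ρ₁ ∉ zpowers a := by
    intro hmem
    obtain ⟨m, hm⟩ := mem_zpowers_iff.mp hmem
    have hcomm : a * ρ₁ = ρ₁ * a := by
      rw [← hm]
      exact ((Commute.refl a).zpow_right m).eq
    have h1' : ρ₁ * a = a⁻¹ * ρ₁ := by
      have := m1 1
      simpa using this
    apply hano2
    have h3 : a = a⁻¹ := by
      have h4 : a * ρ₁ = a⁻¹ * ρ₁ := hcomm.trans h1'
      exact mul_right_cancel h4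
    nth_rewrite 2 [h3]
    exact mul_inv_cancel a
  -- cardinalities
  have hcardA : Nat.card (zpowers a) = 2 ^ t := by rw [Nat.card_zpowers, ht]
  have hcardB : Nat.card (zpowers c) = 2 ^ t := by rw [Nat.card_zpowers, hordc]
  have hcardS : 2 ^ (t + 1) ≤ Nat.card S := by
    have hcard' : Nat.card ((zpowers a).subgroupOf S) = 2 ^ t := by
      rw [Nat.card_congr (Subgroup.subgroupOfEquivOfLe hAleS).toEquiv]
      exact hcardA
    have hidx := Subgroup.card_mul_index ((zpowers a).subgroupOf S)
    have hne1 : ((zpowers a).subgroupOf S).index ≠ 1 := by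
      intro h'
      have htop := Subgroup.index_eq_one.mp h'
      exact hρ₁notA (Subgroup.subgroupOf_eq_top.mp htop hρ₁S)
    have hne0 : ((zpowers a).subgroupOf S).index ≠ 0 := Subgroup.index_ne_zero_of_finite
    calc 2 ^ (t + 1) = 2 ^ t * 2 := by ring
    _ ≤ Nat.card ((zpowers a).subgroupOf S) * ((zpowers a).subgroupOf S).index := by
        rw [hcard']
        exact Nat.mul_le_mul le_rfl (by omega)
    _ = Nat.card S := hidx
  have hn : n ≤ 2 * t + 1 := by omega
  have hGle : Nat.card G ≤ 2 ^ (2 * t + 1) := by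
    rw [hcard]
    exact Nat.pow_le_pow_right (by norm_num) hn
  by_cases hSB : S ⊓ zpowers c = ⊥
  · -- the product map is a bijection, so ρ₀ ∈ S * zpowers c, contradiction
    exfalso
    have hinj : Function.Injective (fun p : ↥S × ↥(zpowers c) => (p.1 : G) * (p.2 : G)) := by
      rintro ⟨s₁, b₁⟩ ⟨s₂, b₂⟩ h'
      simp only at h'
      have hkey : (s₂ : G)⁻¹ * s₁ = (b₂ : G) * (b₁ : G)⁻¹ := by
        have h2 := congrArg (fun x => (s₂ : G)⁻¹ * x * (b₁ : G)⁻¹) h'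
        simpa [mul_assoc] using h2
      have hmem : (s₂ : G)⁻¹ * (s₁ : G) ∈ S ⊓ zpowers c := by
        rw [Subgroup.mem_inf]
        refine ⟨mul_mem (inv_mem s₂.2) s₁.2, ?_⟩
        rw [hkey]
        exact mul_mem b₂.2 (inv_mem b₁.2)
      rw [hSB, Subgroup.mem_bot] at hmem
      have hs12 : (s₁ : G) = (s₂ : G) := by
        rw [inv_mul_eq_one] at hmem
        exact hmem.symm
      have hb12 : (b₁ : G) = (b₂ : G) := by
        apply mul_left_cancel (a := (s₁ : G))
        rw [h', hs12]
      exact Prod.ext (Subtype.ext hs12) (Subtype.ext hb12)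
    have hcount : 2 ^ (2 * t + 1) ≤ Nat.card (↥S × ↥(zpowers c)) := by
      rw [Nat.card_prod, hcardB]
      calc 2 ^ (2 * t + 1) = 2 ^ (t + 1) * 2 ^ t := by ring
      _ ≤ Nat.card S * 2 ^ t := Nat.mul_le_mul hcardS le_rfl
    have hle2 : Nat.card (↥S × ↥(zpowers c)) ≤ Nat.card G :=
      Nat.card_le_card_of_injective _ hinj
    have heq : Nat.card (↥S × ↥(zpowers c)) = Nat.card G :=
      le_antisymm hle2 (le_trans hGle hcount)
    have hbij := (Nat.bijective_iff_injective_and_card _).mpr ⟨hinj, heq⟩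
    obtain ⟨⟨sb, bb⟩, hfb⟩ := hbij.surjective ρ₀
    simp only at hfb
    obtain ⟨m, hm⟩ := mem_zpowers_iff.mp bb.2
    have hbbeq : (bb : G) = ρ₀ * a ^ m * ρ₀⁻¹ := by
      rw [← hm, hcdef, conj_zpow]
    have h' : (sb : G) * (ρ₀ * a ^ m * ρ₀⁻¹) = ρ₀ := by rw [← hbbeq]; exact hfb
    have h'' : (sb : G) * (ρ₀ * a ^ m) = 1 := by
      have h3 := congrArg (fun x => x * ρ₀) h'
      simpa [mul_assoc, i0] using h3
    have h4 : ρ₀ * a ^ m = (sb : G)⁻¹ := eq_inv_of_mul_eq_one_right h''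
    have h5 : ρ₀ = (sb : G)⁻¹ * (a ^ m)⁻¹ := by
      rw [← h4, mul_assoc, mul_inv_cancel, mul_one]
    apply hρ₀D
    rw [h5]
    exact mul_mem (inv_mem (hSle sb.2)) (inv_mem (zpow_mem haD m))
  · -- S ⊓ zpowers c is nontrivial, so it contains the involution of zpowers c
    rcases Subgroup.bot_or_exists_ne_one (S ⊓ zpowers c) with h' | ⟨x, hxmem, hx1⟩
    · exact absurd h' hSB
    have hxc : x ∈ zpowers c := hxmem.2
    have hxS : x ∈ S := hxmem.1
    have hord : orderOf x ∣ 2 ^ t := by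
      rw [← hordc]
      exact orderOf_dvd_of_mem_zpowers hxc
    obtain ⟨r, hr, hordx⟩ := (Nat.dvd_prime_pow Nat.prime_two).mp hord
    have hr1 : 1 ≤ r := by
      rcases Nat.eq_zero_or_pos r with h0' | h1'
      · exfalso
        rw [h0', pow_zero, orderOf_eq_one_iff] at hordx
        exact hx1 hordx
      · exact h1'
    have hordy : orderOf (x ^ (2 ^ (r - 1))) = 2 := aux_orderOf_pow_half hr1 hordx
    have hyy : x ^ (2 ^ (r - 1)) * x ^ (2 ^ (r - 1)) = 1 := by
      have := pow_orderOf_eq_one (x ^ (2 ^ (r - 1)))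
      rwa [hordy, pow_two] at this
    have hy1 : x ^ (2 ^ (r - 1)) ≠ 1 := by
      intro h'
      rw [h', orderOf_one] at hordy
      norm_num at hordy
    have hyz' : x ^ (2 ^ (r - 1)) = c ^ (2 ^ (t - 1)) :=
      aux_unique_involution (by omega) hordc (pow_mem hxc _) hyy hy1
    have hz'S : ρ₀ * z * ρ₀⁻¹ ∈ S := by
      rw [← hz'c, ← hyz']
      exact pow_mem hxS _
    obtain ⟨k, hk | hk⟩ := (hmemS _).mp hz'S
    · -- the involution is a power of a, hence equals z
      have hzz' : ρ₀ * z * ρ₀⁻¹ = z := by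
        have h' := aux_unique_involution (u := t) (by omega) ht
          (mem_zpowers_iff.mpr ⟨k, hk.symm⟩) hz'z' hz'1
        rw [h', ← hz]
      have h6 := congrArg (fun x => x * ρ₀) hzz'
      simpa [mul_assoc] using h6
    · -- the involution is a^k * ρ₁
      exfalso
      -- ρ₂ inverts c, hence commutes with the involution of ⟨c⟩
      have hc2 : ρ₂ * c * ρ₂⁻¹ = c⁻¹ := by
        calc ρ₂ * c * ρ₂⁻¹ = ρ₂ * (ρ₀ * a * ρ₀⁻¹) * ρ₂⁻¹ := by rw [hcdef]
        _ = (ρ₂ * ρ₀) * a * (ρ₂ * ρ₀)⁻¹ := by group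
        _ = (ρ₀ * ρ₂) * a * (ρ₀ * ρ₂)⁻¹ := by rw [← comm02]
        _ = ρ₀ * (ρ₂ * a * ρ₂⁻¹) * ρ₀⁻¹ := by group
        _ = ρ₀ * a⁻¹ * ρ₀⁻¹ := by rw [r2inva]
        _ = (ρ₀ * a * ρ₀⁻¹)⁻¹ := by group
        _ = c⁻¹ := by rw [← hcdef]
      have hinvz' : (c ^ (2 ^ (t - 1)))⁻¹ = c ^ (2 ^ (t - 1)) := by
        rw [inv_eq_iff_mul_eq_one, hz'c]
        exact hz'z'
      have hcommz'2 : ρ₂ * (ρ₀ * z * ρ₀⁻¹) = (ρ₀ * z * ρ₀⁻¹) * ρ₂ := by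
        have hconj : ρ₂ * (ρ₀ * z * ρ₀⁻¹) * ρ₂⁻¹ = ρ₀ * z * ρ₀⁻¹ := by
          calc ρ₂ * (ρ₀ * z * ρ₀⁻¹) * ρ₂⁻¹
              = ρ₂ * c ^ (2 ^ (t - 1)) * ρ₂⁻¹ := by rw [hz'c]
          _ = (ρ₂ * c * ρ₂⁻¹) ^ (2 ^ (t - 1)) := conj_pow.symm
          _ = (c⁻¹) ^ (2 ^ (t - 1)) := by rw [hc2]
          _ = (c ^ (2 ^ (t - 1)))⁻¹ := by rw [inv_pow]
          _ = c ^ (2 ^ (t - 1)) := hinvz'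
          _ = ρ₀ * z * ρ₀⁻¹ := hz'c
        calc ρ₂ * (ρ₀ * z * ρ₀⁻¹) = (ρ₂ * (ρ₀ * z * ρ₀⁻¹) * ρ₂⁻¹) * ρ₂ := by group
        _ = (ρ₀ * z * ρ₀⁻¹) * ρ₂ := by rw [hconj]
      rw [hk] at hcommz'2
      have hba : ρ₂ * ρ₁ = a⁻¹ := by rw [ha, mul_inv_rev, inv1, inv2]
      have hL : ρ₂ * (a ^ k * ρ₁) = a ^ (-k + -1) := by
        rw [← mul_assoc, m2 k, mul_assoc, hba, zpow_add]
        congr 1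
        rw [zpow_neg, zpow_one]
      have hR : (a ^ k * ρ₁) * ρ₂ = a ^ (k + 1) := by
        rw [mul_assoc, ← ha, ← zpow_add_one]
      rw [hL, hR] at hcommz'2
      -- so a ^ (2*(k+1)) = 1
      have hzero : a ^ ((k + 1) + (k + 1)) = 1 := by
        rw [zpow_add]
        nth_rewrite 1 [← hcommz'2]
        rw [← zpow_add, show (-k + -1) + (k + 1) = 0 by ring, zpow_zero]
      have hdvd : ((2:ℤ) ^ t) ∣ 2 * (k + 1) := by
        have hd := orderOf_dvd_iff_zpow_eq_one.mpr hzero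
        rw [ht] at hd
        push_cast at hd
        convert hd using 1
        ring
      have hdvd' : ((2:ℤ) ^ (t - 1)) ∣ (k + 1) := by
        have h2' : (2:ℤ) ^ t = 2 * 2 ^ (t - 1) := by
          rw [← pow_succ']
          congr 1
          omega
        rw [h2'] at hdvd
        exact (mul_dvd_mul_iff_left (two_ne_zero)).mp hdvd
      obtain ⟨j, hj⟩ := hdvd'
      have hak : a ^ k = z ^ j * a⁻¹ := by
        have hkval : k = 2 ^ (t - 1) * j - 1 := by linarith [hj]
        have hcast : ((2:ℤ)) ^ (t - 1) = ((2 ^ (t - 1) : ℕ) : ℤ) := by push_cast; ring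
        rw [hkval, zpow_sub, zpow_one, zpow_mul, hcast, zpow_natCast, ← hz]
      have hinvρ₁ : a⁻¹ * ρ₁ = ρ₂ := by
        rw [ha, mul_inv_rev, inv1, inv2, mul_assoc, i1, mul_one]
      rcases Int.even_or_odd j with ⟨i, hi⟩ | ⟨i, hi⟩
      · -- z ^ j = 1 : then ρ₀ z ρ₀⁻¹ = ρ₂, so z = ρ₂, contradiction
        have hzj : z ^ j = 1 := by
          rw [hi, ← two_mul, zpow_mul, zpow_two, hzz, one_zpow]
        have hz'ρ₂ : ρ₀ * z * ρ₀⁻¹ = ρ₂ := by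
          rw [hk, hak, hzj, one_mul, hinvρ₁]
        have hzρ₂ : z = ρ₂ := by
          have h7 : z = ρ₀⁻¹ * (ρ₀ * z * ρ₀⁻¹) * ρ₀ := by group
          rw [hz'ρ₂, inv0] at h7
          rw [h7, comm02, mul_assoc, i0, mul_one]
        apply hano2
        have hra : ρ₂ * a = a * ρ₂ := by
          rw [← hzρ₂]
          exact hza.symm.eq
        have h1' : ρ₂ * a = a⁻¹ * ρ₂ := by
          have := m2 1
          simpa using this
        have h3' : a = a⁻¹ := mul_right_cancel (hra.symm.trans h1')
        nth_rewrite 2 [h3']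
        exact mul_inv_cancel a
      · -- z ^ j = z : then ρ₂ = z ρ₀ z ρ₀, contradiction by parity
        have hzj : z ^ j = z := by
          rw [hi, zpow_add, zpow_mul, zpow_two, hzz, one_zpow, one_mul, zpow_one]
        have hbad : ρ₀ * z * ρ₀⁻¹ = z * ρ₂ := by
          rw [hk, hak, hzj, mul_assoc, hinvρ₁]
        have hρ₂eq : ρ₂ = z * (ρ₀ * z * ρ₀) := by
          have h8 : ρ₂ = z * (ρ₀ * z * ρ₀⁻¹) := by
            rw [hbad, ← mul_assoc, hzz, one_mul]
          rw [h8, inv0]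
        have hproper : closure ({ρ₀, ρ₁} : Set G) ≠ ⊤ := hmin _ hss01
        obtain ⟨M, hleM, hMnormal, hMidx⟩ := aux_exists_index_two hcard hproper
        haveI := hMnormal
        set π := QuotientGroup.mk' M with hπ
        have hcardQ : Nat.card (G ⧸ M) = 2 := by
          rw [← Subgroup.index_eq_card]
          exact hMidx
        haveI : Finite (G ⧸ M) := Nat.finite_of_card_ne_zero (by rw [hcardQ]; norm_num)
        have hsq : ∀ w : G ⧸ M, w * w = 1 := by
          intro w
          have hdvd : orderOf w ∣ 2 := by rw [← hcardQ]; exact orderOf_dvd_natCard w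
          have h1' := orderOf_dvd_iff_pow_eq_one.mp hdvd
          rwa [pow_two] at h1'
        have hcomm : ∀ u v : G ⧸ M, u * v = v * u := by
          intro u v
          by_cases hu : u = 1
          · rw [hu, one_mul, mul_one]
          · have hou : orderOf u = 2 := by
              have hdvd : orderOf u ∣ 2 := by rw [← hcardQ]; exact orderOf_dvd_natCard u
              rcases (Nat.dvd_prime Nat.prime_two).mp hdvd with h' | h'
              · exact absurd (orderOf_eq_one_iff.mp h') hu
              · exact h'
            have hzp : zpowers u = ⊤ := by
              apply Subgroup.eq_top_of_card_eq
              rw [Nat.card_zpowers, hou, hcardQ]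
            have hv : v ∈ zpowers u := by rw [hzp]; trivial
            obtain ⟨m, rfl⟩ := mem_zpowers_iff.mp hv
            exact ((Commute.refl u).zpow_right m).eq
        have hπρ₂ : π ρ₂ = 1 := by
          have he : π ρ₂ = π z * (π ρ₀ * π z * π ρ₀) := by
            rw [hρ₂eq]
            simp only [map_mul]
          rw [he]
          calc π z * (π ρ₀ * π z * π ρ₀) = π z * (π z * π ρ₀ * π ρ₀) := by
                rw [hcomm (π ρ₀) (π z)]
          _ = (π z * π z) * (π ρ₀ * π ρ₀) := by group
          _ = 1 := by rw [hsq, hsq, one_mul]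
        have hρ₂M : ρ₂ ∈ M := (QuotientGroup.eq_one_iff ρ₂).mp hπρ₂
        have hρ₀M : ρ₀ ∈ M := hleM (subset_closure (by simp))
        have hρ₁M : ρ₁ ∈ M := hleM (subset_closure (by simp))
        have hMtop : M = ⊤ := by
          rw [eq_top_iff, ← hgen, closure_le]
          rintro x hx
          simp only [Set.mem_insert_iff, Set.mem_singleton_iff] at hx
          rcases hx with rfl | rfl | rfl
          · exact hρ₀M
          · exact hρ₁M
          · exact hρ₂M
        rw [hMtop, Subgroup.index_top] at hMidx
        norm_num at hMidx
end

section
/- Let G be a finite group of order 2^n generated by three involutions ρ₀, ρ₁, ρ₂ with (ρ₀ρ₂)² = 1, where ρ₀ρ₁ has order 2^s and ρ₁ρ₂ has order 2^t with 2 ≤ s ≤ t, {ρ₀, ρ₁, ρ₂} is a minimal generating set, ⟨ρ₀, ρ₁⟩ ∩ ⟨ρ₁, ρ₂⟩ = ⟨ρ₁⟩, and 2t ≥ n−1. Let N = ⟨(ρ₁ρ₂)^{2^{t−1}}⟩ (which is normal in G of order 2), and write x̄ for the image of x in Ḡ = G/N. Then Ḡ has order 2^{n−1}, ρ̄₀ρ̄₁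 has order 2^s, ρ̄₁ρ̄₂ has order 2^{t−1}, and ⟨ρ̄₀, ρ̄₁⟩ ∩ ⟨ρ̄₁, ρ̄₂⟩ = ⟨ρ̄₁⟩. -/
private lemma two_elem {G : Type*} [Group G] {x g : G} (hx : x ^ 2 = 1)
    (hg : g ∈ Subgroup.zpowers x) : g = 1 ∨ g = x := by
  obtain ⟨k, hk⟩ := hg
  have hk' : x ^ k = g := hk
  have hx2 : x ^ (2 : ℤ) = 1 := by rw [show (2:ℤ) = ((2:ℕ):ℤ) from rfl, zpow_natCast, hx]
  rcases Int.even_or_odd k with ⟨m, hm⟩ | ⟨m, hm⟩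
  · left
    rw [← hk', hm, show m + m = 2 * m by ring, zpow_mul, hx2, one_zpow]
  · right
    rw [← hk', hm, zpow_add, zpow_mul, hx2, one_zpow, one_mul, zpow_one]

set_option maxHeartbeats 1000000 in
/-- Under the hypotheses of the quotient lemma (string C-group of order `2^n` and
type `{2^s, 2^t}` with `2 ≤ s ≤ t` and `2t ≥ n - 1`), the quotient
`Ḡ = G/⟨(ρ₁ρ₂)^(2^(t-1))⟩` has order `2^(n-1)`, `ρ̄₀ρ̄₁` has order `2^s`,
`ρ̄₁ρ̄₂` has order `2^(t-1)`, and `⟨ρ̄₀, ρ̄₁⟩ ∩ ⟨ρ̄₁, ρ̄₂⟩ = ⟨ρ̄₁⟩`. -/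
theorem quotient_stmt16 {G : Type*} [Group G] (ρ₀ ρ₁ ρ₂ : G)
    (n s t : ℕ)
    (hcard : Nat.card G = 2 ^ n)
    (h0 : ρ₀ ^ 2 = 1) (h1 : ρ₁ ^ 2 = 1) (h2 : ρ₂ ^ 2 = 1)
    (h02 : (ρ₀ * ρ₂) ^ 2 = 1)
    (hs : orderOf (ρ₀ * ρ₁) = 2 ^ s) (ht : orderOf (ρ₁ * ρ₂) = 2 ^ t)
    (hs2 : 2 ≤ s) (hst : s ≤ t)
    (hgen : Subgroup.closure {ρ₀, ρ₁, ρ₂} = ⊤)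
    (hmin : ∀ T : Set G, T ⊂ {ρ₀, ρ₁, ρ₂} → Subgroup.closure T ≠ ⊤)
    (hint : Subgroup.closure {ρ₀, ρ₁} ⊓ Subgroup.closure {ρ₁, ρ₂}
      = Subgroup.closure {ρ₁})
    (h2t : 2 * t ≥ n - 1)
    (N : Subgroup G) (hN : N = Subgroup.zpowers ((ρ₁ * ρ₂) ^ (2 ^ (t - 1))))
    [N.Normal] :
    Nat.card (G ⧸ N) = 2 ^ (n - 1) ∧
      orderOf ((QuotientGroup.mk' N ρ₀) * (QuotientGroup.mk' N ρ₁)) = 2 ^ s ∧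
      orderOf ((QuotientGroup.mk' N ρ₁) * (QuotientGroup.mk' N ρ₂)) = 2 ^ (t - 1) ∧
      Subgroup.closure {QuotientGroup.mk' N ρ₀, QuotientGroup.mk' N ρ₁} ⊓
          Subgroup.closure {QuotientGroup.mk' N ρ₁, QuotientGroup.mk' N ρ₂}
        = Subgroup.closure {QuotientGroup.mk' N ρ₁} := by
  haveI : Fact (Nat.Prime 2) := ⟨Nat.prime_two⟩
  have ht2 : 2 ≤ t := hs2.trans hst
  set a := ρ₁ * ρ₂ with ha
  set z := a ^ 2 ^ (t - 1) with hzdef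
  clear_value a z
  have hapow : a ^ 2 ^ t = 1 := by rw [← ht]; exact pow_orderOf_eq_one a
  have hz2 : z ^ 2 = 1 := by
    rw [hzdef, ← pow_mul, show 2 ^ (t - 1) * 2 = 2 ^ t by
      rw [← pow_succ]; congr 1; omega, hapow]
  have hane : ∀ k : ℕ, k < t → a ^ 2 ^ k ≠ 1 := by
    intro k hk h
    have hd := orderOf_dvd_of_pow_eq_one h
    rw [ht] at hd
    have := Nat.le_of_dvd (by positivity) hd
    exact absurd this (by
      have := Nat.pow_lt_pow_right (by norm_num : 1 < 2) hk
      omega)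
  have hzne : z ≠ 1 := by rw [hzdef]; exact hane (t - 1) (by omega)
  have hordz : orderOf z = 2 := orderOf_eq_prime hz2 hzne
  -- a⁻¹ = ρ₂ * ρ₁
  have h1' : ρ₁ * ρ₁ = 1 := by rw [← sq]; exact h1
  have h2' : ρ₂ * ρ₂ = 1 := by rw [← sq]; exact h2
  have hainv : a⁻¹ = ρ₂ * ρ₁ := by
    rw [ha]; rw [mul_inv_rev, inv_eq_of_mul_eq_one_left h1', inv_eq_of_mul_eq_one_left h2']
  -- key: z ≠ ρ₁
  have hkey : z ≠ ρ₁ := by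
    intro h
    have hcomm : ρ₁ * a = a * ρ₁ := by
      rw [← h, hzdef]; exact ((Commute.refl a).pow_left _).eq
    have : a⁻¹ = a := by
      calc a⁻¹ = ρ₂ * ρ₁ := hainv
        _ = (ρ₁ * ρ₁) * ρ₂ * ρ₁ := by rw [h1', one_mul]
        _ = ρ₁ * a * ρ₁ := by rw [ha]; group
        _ = a * ρ₁ * ρ₁ := by rw [hcomm]
        _ = a := by rw [mul_assoc, h1', mul_one]
    have ha2 : a ^ 2 = 1 := by
      rw [sq]; nth_rewrite 2 [← this]; exact mul_inv_cancel a
    exact hane 1 (by omega) (by simpa using ha2)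
  subst hN
  set π := QuotientGroup.mk' (Subgroup.zpowers z) with hπ
  have hker : ∀ x : G, π x = 1 ↔ x ∈ Subgroup.zpowers z := by
    intro x
    rw [← MonoidHom.mem_ker, QuotientGroup.ker_mk']
  -- membership of z
  have hamem : a ∈ Subgroup.closure {ρ₁, ρ₂} := by
    rw [ha]
    exact mul_mem (Subgroup.subset_closure (Set.mem_insert _ _))
      (Subgroup.subset_closure (Set.mem_insert_of_mem _ rfl))
  have hzmem : z ∈ Subgroup.closure {ρ₁, ρ₂} := by
    rw [hzdef]; exact pow_mem hamem _
  -- order of π ρ₁ * π ρ₂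
  have hπa : π ρ₁ * π ρ₂ = π a := by rw [← map_mul, ← ha]
  have hordt : orderOf (π ρ₁ * π ρ₂) = 2 ^ (t - 1) := by
    rw [hπa]
    have h1q : (π a) ^ 2 ^ ((t - 2) + 1) = 1 := by
      rw [show (t - 2) + 1 = t - 1 by omega, ← map_pow, ← hzdef, hker]
      exact Subgroup.mem_zpowers z
    have h2q : ¬(π a) ^ 2 ^ (t - 2) = 1 := by
      intro h
      rw [← map_pow, hker] at h
      rcases two_elem hz2 h with h' | h'
      · exact hane (t - 2) (by omega) h'
      · have : z = 1 := by
          calc z = a ^ 2 ^ (t - 1) := hzdef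
            _ = (a ^ 2 ^ (t - 2)) ^ 2 := by
                rw [← pow_mul]; congr 1
                rw [← pow_succ]; congr 1; omega
            _ = z ^ 2 := by rw [h']
            _ = 1 := hz2
        exact hzne this
    have := orderOf_eq_prime_pow h2q h1q
    rw [this]; congr 1; omega
  -- order of π ρ₀ * π ρ₁
  have hb : π ρ₀ * π ρ₁ = π (ρ₀ * ρ₁) := by rw [← map_mul]
  have hords : orderOf (π ρ₀ * π ρ₁) = 2 ^ s := by
    rw [hb]
    have h1q : (π (ρ₀ * ρ₁)) ^ 2 ^ ((s - 1) + 1) = 1 := by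
      rw [show (s - 1) + 1 = s by omega, ← map_pow, ← hs, pow_orderOf_eq_one, map_one]
    have h2q : ¬(π (ρ₀ * ρ₁)) ^ 2 ^ (s - 1) = 1 := by
      intro h
      rw [← map_pow, hker] at h
      rcases two_elem hz2 h with h' | h'
      · have hd := orderOf_dvd_of_pow_eq_one h'
        rw [hs] at hd
        have := Nat.le_of_dvd (by positivity) hd
        have h2lt := Nat.pow_lt_pow_right (by norm_num : 1 < 2) (show s - 1 < s by omega)
        omega
      · -- z = (ρ₀ρ₁)^(2^(s-1)) ∈ ⟨ρ₀,ρ₁⟩ ∩ ⟨ρ₁,ρ₂⟩ = ⟨ρ₁⟩, so z = ρ₁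
        have hz01 : z ∈ Subgroup.closure {ρ₀, ρ₁} := by
          rw [← h']
          exact pow_mem (mul_mem (Subgroup.subset_closure (Set.mem_insert ρ₀ {ρ₁}))
            (Subgroup.subset_closure (Set.mem_insert_of_mem ρ₀ rfl))) (2 ^ (s - 1))
        have hzint : z ∈ Subgroup.closure {ρ₁} := by
          rw [← hint, Subgroup.mem_inf]; exact ⟨hz01, hzmem⟩
        rw [← Subgroup.zpowers_eq_closure] at hzint
        rcases two_elem h1 hzint with h'' | h''
        · exact hzne h''
        · exact hkey h''
    have := orderOf_eq_prime_pow h2q h1q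
    rw [this]; congr 1; omega
  -- cardinality
  have hfin : Finite G := Nat.finite_of_card_ne_zero (by rw [hcard]; positivity)
  have hcardN : Nat.card (Subgroup.zpowers z) = 2 := by rw [Nat.card_zpowers, hordz]
  have hmul := Subgroup.card_eq_card_quotient_mul_card_subgroup (Subgroup.zpowers z)
  rw [hcard, hcardN] at hmul
  have htn : t ≤ n := by
    have hd := orderOf_dvd_natCard a
    rw [ht, hcard] at hd
    have := Nat.le_of_dvd (by positivity) hd
    by_contra hlt
    have := Nat.pow_lt_pow_right (by norm_num : 1 < 2) (show n < t by omega)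
    omega
  have hcardQ : Nat.card (G ⧸ Subgroup.zpowers z) = 2 ^ (n - 1) := by
    have h2n : 2 ^ n = 2 ^ (n - 1) * 2 := by
      rw [← pow_succ]; congr 1; omega
    omega
  refine ⟨hcardQ, hords, hordt, ?_⟩
  -- intersection
  have hmapeq : ∀ x y : G,
      (Subgroup.closure {x, y}).map (π : G →* G ⧸ Subgroup.zpowers z)
        = Subgroup.closure {π x, π y} := by
    intro x y
    rw [MonoidHom.map_closure, Set.image_insert_eq, Set.image_singleton]
  have hmapeq1 : ∀ x : G,
      (Subgroup.closure {x}).map (π : G →* G ⧸ Subgroup.zpowers z)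
        = Subgroup.closure {π x} := by
    intro x
    rw [MonoidHom.map_closure, Set.image_singleton]
  apply le_antisymm
  · intro g hg
    rw [Subgroup.mem_inf, ← hmapeq, ← hmapeq] at hg
    obtain ⟨⟨h, hh, hπh⟩, ⟨k, hk, hπk⟩⟩ := hg
    have hker' : h * k⁻¹ ∈ Subgroup.zpowers z := by
      rw [← hker, map_mul, map_inv, hπh, hπk, mul_inv_cancel]
    have hh' : h ∈ Subgroup.closure {ρ₁, ρ₂} := by
      have : h = (h * k⁻¹) * k := by group
      rw [this]
      exact mul_mem (Subgroup.zpowers_le.mpr hzmem hker') hk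
    have : h ∈ Subgroup.closure {ρ₁} := by
      rw [← hint, Subgroup.mem_inf]; exact ⟨hh, hh'⟩
    rw [← hmapeq1]
    exact ⟨h, this, hπh⟩
  · apply le_inf
    · rw [Subgroup.closure_le]
      intro x hx
      rw [Set.mem_singleton_iff] at hx
      subst hx
      exact Subgroup.subset_closure (Set.mem_insert_of_mem _ rfl)
    · rw [Subgroup.closure_le]
      intro x hx
      rw [Set.mem_singleton_iff] at hx
      subst hx
      exact Subgroup.subset_closure (Set.mem_insert _ _)
end
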